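/- arXiv:2109.08837 — 3 statements merged into one kernel-verified Lean document; each statement's English description precedes it below -/
import Mathlib

section
/- Let F: ℝ → ℝ be defined by F(x) = sup_{μ∈P(A)} inf_{ν∈P(B)} [G(μ,ν) + (q(μ,ν)+c(μ,ν))x] with A, B compact metric spaces, G, q, c continuous, q ≤ 0, and c < -δ for some δ > 0. Then F is continuous, F(x) → -∞ as x → +∞, F(x) → +∞ as x → -∞, and for every y ∈ ℝ there exists a unique x ∈ ℝ with F(x) = y. -/
open MeasureTheory Filter

open Metric Set Topology NNReal ENNReal


section Sep
variable {S : Type*} [MetricSpace S] [CompactSpace S] [Nonempty S]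

noncomputable local instance : TopologicalSpace.SeparableSpace S :=
  TopologicalSpace.isSeparable_univ_iff.mp isCompact_univ.isSeparable

noncomputable def eSeq : ℕ → S := TopologicalSpace.denseSeq S

noncomputable def CS (t : Finset (ℕ × ℚ)) : Set S :=
  ⋃ p ∈ t, closedBall (eSeq p.1) (p.2 : ℝ)

lemma isClosed_CS (t : Finset (ℕ × ℚ)) : IsClosed (CS (S := S) t) :=
  t.finite_toSet.isClosed_biUnion (fun _ _ => isClosed_closedBall)

lemma CS_union (t₁ t₂ : Finset (ℕ × ℚ)) : CS (S := S) (t₁ ∪ t₂) = CS t₁ ∪ CS t₂ := by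
  simp only [CS]
  rw [Finset.set_biUnion_union]

lemma exists_CS_between {K U : Set S} (hK : IsCompact K) (hU : IsOpen U) (hKU : K ⊆ U) :
    ∃ t, K ⊆ interior (CS (S := S) t) ∧ CS t ⊆ U := by
  have hdense : DenseRange (eSeq (S := S)) := TopologicalSpace.denseRange_denseSeq S
  -- for each x in K choose a ball
  have key : ∀ x ∈ K, ∃ p : ℕ × ℚ, x ∈ ball (eSeq p.1) (p.2 : ℝ) ∧
      closedBall (eSeq p.1) (p.2 : ℝ) ⊆ U := by
    intro x hx
    obtain ⟨ε, hε, hballU⟩ := Metric.isOpen_iff.mp hU x (hKU hx)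
    obtain ⟨q, hq0, hqε⟩ := exists_rat_btwn (show (0:ℝ) < ε/3 by linarith)
    have hq0' : (0:ℝ) < q := by exact_mod_cast hq0
    obtain ⟨n, hn⟩ := (Metric.denseRange_iff.mp hdense) x q hq0'
    refine ⟨(n, q), ?_, ?_⟩
    · simpa [ball, dist_comm] using hn
    · intro y hy
      apply hballU
      have : dist y x ≤ dist y (eSeq n) + dist (eSeq n) x := dist_triangle _ _ _
      have h1 : dist y (eSeq n) ≤ q := hy
      have h2 : dist (eSeq n) x < q := by simpa [dist_comm] using hn
      have : dist y x < ε := by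
        have hq3 : (q:ℝ) < ε/3 := hqε
        calc dist y x ≤ dist y (eSeq n) + dist (eSeq n) x := dist_triangle _ _ _
        _ < q + q := by linarith
        _ < ε := by linarith
      exact this
  choose! p hp1 hp2 using key
  obtain ⟨s, hs⟩ := hK.elim_finite_subcover (fun x : K => ball (eSeq (p x).1) ((p x).2 : ℝ))
    (fun _ => isOpen_ball) (fun x hx => mem_iUnion.mpr ⟨⟨x, hx⟩, hp1 x hx⟩)
  refine ⟨s.image (fun x : K => p (x : S)), ?_, ?_⟩
  · intro x hx
    obtain ⟨i, his, hxball⟩ := Set.mem_iUnion₂.mp (hs hx)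
    have hsub : ball (eSeq (p (i : S)).1) ((p (i : S)).2 : ℝ) ⊆ interior (CS (S := S) (s.image (fun x : K => p (x : S)))) := by
      apply interior_maximal _ isOpen_ball
      intro y hy
      exact Set.mem_biUnion (Finset.mem_image_of_mem _ his) (ball_subset_closedBall hy)
    exact hsub hxball
  · intro y hy
    obtain ⟨q, hqmem, hyball⟩ := Set.mem_iUnion₂.mp hy
    obtain ⟨i, his, rfl⟩ := Finset.mem_image.mp hqmem
    exact hp2 (i : S) i.2 hyball

end Sep

-- ## sum of infima in ℝ≥0
lemma nnreal_inf_add_inf {ι₁ ι₂ : Sort*} [Nonempty ι₁] [Nonempty ι₂]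
    (f : ι₁ → ℝ≥0) (g : ι₂ → ℝ≥0) :
    (⨅ i, f i) + (⨅ j, g j) = ⨅ i, ⨅ j, (f i + g j) := by
  apply ENNReal.coe_injective
  rw [ENNReal.coe_add, ENNReal.coe_iInf, ENNReal.coe_iInf, ENNReal.coe_iInf, ENNReal.iInf_add]
  refine iInf_congr fun i => ?_
  rw [ENNReal.add_iInf, ENNReal.coe_iInf]
  exact iInf_congr fun j => (ENNReal.coe_add _ _).symm

section Prokhorov
variable {S : Type*} [MetricSpace S] [CompactSpace S] [Nonempty S]
  [MeasurableSpace S] [BorelSpace S]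

lemma exists_subseq_tendsto_probabilityMeasure (μs : ℕ → ProbabilityMeasure S) :
    ∃ (P : ProbabilityMeasure S) (φ : ℕ → ℕ), StrictMono φ ∧
      Tendsto (fun j => μs (φ j)) atTop (𝓝 P) := by
  classical
  -- extract a subsequence along which measures of all CS-sets converge
  have hcomp : IsCompact (Set.pi Set.univ (fun _ : Finset (ℕ × ℚ) => Set.Icc (0:ℝ≥0) 1)) :=
    isCompact_univ_pi (fun _ => isCompact_Icc)
  obtain ⟨L, -, φ, hφ, hLtends⟩ := hcomp.tendsto_subseq
    (x := fun n => (fun t => μs n (CS (S := S) t)))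
    (fun n t _ => ⟨zero_le, (μs n).apply_le_one _⟩)
  have hL : ∀ t, Tendsto (fun j => μs (φ j) (CS (S := S) t)) atTop (𝓝 (L t)) :=
    fun t => tendsto_pi_nhds.mp hLtends t
  have hL1 : ∀ t, L t ≤ 1 :=
    fun t => le_of_tendsto (hL t) (Eventually.of_forall fun j => (μs (φ j)).apply_le_one _)
  -- additivity helpers for ℝ≥0-valued probability measures
  have pm_union_le : ∀ (μ : ProbabilityMeasure S) (A B' : Set S), μ (A ∪ B') ≤ μ A + μ B' := by
    intro μ A B'
    rw [← ENNReal.coe_le_coe, ENNReal.coe_add]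
    simp only [ProbabilityMeasure.ennreal_coeFn_eq_coeFn_toMeasure]
    exact measure_union_le _ _
  have pm_union_eq : ∀ (μ : ProbabilityMeasure S) (A B' : Set S), Disjoint A B' →
      MeasurableSet B' → μ (A ∪ B') = μ A + μ B' := by
    intro μ A B' hd hB
    rw [← ENNReal.coe_inj, ENNReal.coe_add]
    simp only [ProbabilityMeasure.ennreal_coeFn_eq_coeFn_toMeasure]
    exact measure_union hd hB
  -- admissible approximating sets always exist
  have hadm : ∀ K : TopologicalSpace.Compacts S,
      Nonempty {t : Finset (ℕ × ℚ) // (K : Set S) ⊆ interior (CS (S := S) t)} := by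
    intro K
    obtain ⟨t, h1, -⟩ := exists_CS_between K.isCompact isOpen_univ (subset_univ _)
    exact ⟨⟨t, h1⟩⟩
  -- the content
  set ρfun : TopologicalSpace.Compacts S → ℝ≥0 :=
    fun K => ⨅ t : {t : Finset (ℕ × ℚ) // (K : Set S) ⊆ interior (CS (S := S) t)}, L t with hρfun
  have hρ_le_L : ∀ (K : TopologicalSpace.Compacts S) (t : Finset (ℕ × ℚ))
      (h : (K : Set S) ⊆ interior (CS (S := S) t)), ρfun K ≤ L t := by
    intro K t h
    exact ciInf_le (OrderBot.bddBelow _) (⟨t, h⟩ : {t // (K : Set S) ⊆ interior (CS (S := S) t)})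
  have hρ_le_one : ∀ K, ρfun K ≤ 1 := by
    intro K
    obtain ⟨t⟩ := hadm K
    exact (hρ_le_L K t.1 t.2).trans (hL1 _)
  have hmono : ∀ K₁ K₂ : TopologicalSpace.Compacts S, (K₁ : Set S) ⊆ K₂ → ρfun K₁ ≤ ρfun K₂ := by
    intro K₁ K₂ hsub
    haveI := hadm K₂
    refine le_ciInf fun t => hρ_le_L _ _ (hsub.trans t.2)
  have hLmono : ∀ t₁ t₂ : Finset (ℕ × ℚ), CS (S := S) t₁ ⊆ CS (S := S) t₂ → L t₁ ≤ L t₂ := by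
    intro t₁ t₂ h
    exact le_of_tendsto_of_tendsto' (hL t₁) (hL t₂)
      (fun j => (μs (φ j)).apply_mono h)
  have hsup_le : ∀ K₁ K₂ : TopologicalSpace.Compacts S,
      ρfun (K₁ ⊔ K₂) ≤ ρfun K₁ + ρfun K₂ := by
    intro K₁ K₂
    haveI := hadm K₁; haveI := hadm K₂
    rw [hρfun]
    dsimp only
    rw [nnreal_inf_add_inf]
    refine le_ciInf fun t₁ => le_ciInf fun t₂ => ?_
    have hunion : ((K₁ ⊔ K₂ : TopologicalSpace.Compacts S) : Set S)
        ⊆ interior (CS (S := S) (t₁.1 ∪ t₂.1)) := by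
      rw [TopologicalSpace.Compacts.coe_sup]
      refine union_subset (t₁.2.trans (interior_mono ?_)) (t₂.2.trans (interior_mono ?_)) <;>
        rw [CS_union]
      · exact subset_union_left
      · exact subset_union_right
    refine (hρ_le_L _ _ hunion).trans ?_
    refine le_of_tendsto_of_tendsto' (hL _) ((hL t₁.1).add (hL t₂.1)) fun j => ?_
    rw [CS_union]
    exact pm_union_le _ _ _
  have hsup_disjoint : ∀ K₁ K₂ : TopologicalSpace.Compacts S, Disjoint (K₁ : Set S) (K₂ : Set S) →
      ρfun (K₁ ⊔ K₂) = ρfun K₁ + ρfun K₂ := by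
    intro K₁ K₂ hdisj
    refine le_antisymm (hsup_le K₁ K₂) ?_
    haveI := hadm (K₁ ⊔ K₂)
    refine le_ciInf fun t => ?_
    obtain ⟨δ, hδ, hthick⟩ := hdisj.exists_thickenings K₁.isCompact K₂.isCompact.isClosed
    have hsubt := t.2
    simp only [TopologicalSpace.Compacts.coe_sup, union_subset_iff] at hsubt
    obtain ⟨t₁, ht₁, ht₁sub⟩ := exists_CS_between (S := S) K₁.isCompact
      (isOpen_interior.inter isOpen_thickening)
      (subset_inter hsubt.1 (self_subset_thickening hδ _))
    obtain ⟨t₂, ht₂, ht₂sub⟩ := exists_CS_between (S := S) K₂.isCompact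
      (isOpen_interior.inter isOpen_thickening)
      (subset_inter hsubt.2 (self_subset_thickening hδ _))
    have h1 : ρfun K₁ ≤ L t₁ := hρ_le_L _ _ ht₁
    have h2 : ρfun K₂ ≤ L t₂ := hρ_le_L _ _ ht₂
    have hdisj' : Disjoint (CS (S := S) t₁) (CS (S := S) t₂) :=
      hthick.mono (ht₁sub.trans inter_subset_right) (ht₂sub.trans inter_subset_right)
    have hsum : L t₁ + L t₂ ≤ L t := by
      refine le_of_tendsto_of_tendsto' ((hL t₁).add (hL t₂)) (hL t.1) fun j => ?_
      rw [← pm_union_eq _ _ _ hdisj' (isClosed_CS t₂).measurableSet]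
      refine (μs (φ j)).apply_mono ?_
      refine union_subset (ht₁sub.trans ?_) (ht₂sub.trans ?_) <;>
        exact inter_subset_left.trans interior_subset
    exact (add_le_add h1 h2).trans hsum
  set ρ : Content S :=
    { toFun := ρfun
      mono' := hmono
      sup_disjoint' := fun K₁ K₂ h _ _ => hsup_disjoint K₁ K₂ h
      sup_le' := hsup_le } with hρ
  -- ρfun of univ is 1
  have huniv : ρfun ⟨univ, isCompact_univ⟩ = 1 := by
    haveI := hadm ⟨univ, isCompact_univ⟩
    rw [hρfun]
    dsimp only
    have : ∀ t : {t : Finset (ℕ × ℚ) //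
        (univ : Set S) ⊆ interior (CS (S := S) t)}, L t.1 = 1 := by
      intro t
      have hCS : CS (S := S) t.1 = univ :=
        eq_univ_of_univ_subset (t.2.trans interior_subset)
      refine tendsto_nhds_unique (hL t.1) ?_
      simp only [hCS, ProbabilityMeasure.coeFn_univ]
      exact tendsto_const_nhds
    calc (⨅ t : {t : Finset (ℕ × ℚ) // (univ : Set S) ⊆ interior (CS (S := S) t)},
        L t.1) = ⨅ _ : {t : Finset (ℕ × ℚ) // (univ : Set S) ⊆ interior (CS (S := S) t)},
        (1 : ℝ≥0) := by exact iInf_congr this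
      _ = 1 := ciInf_const
  have hmeas_univ : ρ.measure univ = 1 := by
    rw [ρ.measure_apply MeasurableSet.univ, ρ.outerMeasure_of_isOpen univ isOpen_univ]
    refine le_antisymm ?_ ?_
    · refine iSup_le fun K => iSup_le fun _ => ?_
      have : ρ.toFun K = ρfun K := rfl
      show ((ρ.toFun K : ℝ≥0) : ℝ≥0∞) ≤ 1
      rw [this]
      exact_mod_cast ENNReal.coe_le_coe.mpr (hρ_le_one K)
    · have := ρ.le_innerContent ⟨univ, isCompact_univ⟩ ⟨univ, isOpen_univ⟩ (subset_refl _)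
      calc (1 : ℝ≥0∞) = ((ρfun ⟨univ, isCompact_univ⟩ : ℝ≥0) : ℝ≥0∞) := by rw [huniv]; rfl
        _ ≤ _ := this
  haveI : IsProbabilityMeasure ρ.measure := ⟨hmeas_univ⟩
  set P : ProbabilityMeasure S := ⟨ρ.measure, inferInstance⟩ with hP
  refine ⟨P, φ, hφ, ?_⟩
  apply tendsto_of_forall_isOpen_le_liminf
  intro G hG
  set l : ℝ≥0 := atTop.liminf (fun j => μs (φ j) G) with hl
  -- each compact inside G has content at most l
  have step1 : ∀ K : TopologicalSpace.Compacts S, (K : Set S) ⊆ G → ρfun K ≤ l := by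
    intro K hKG
    obtain ⟨t₀, ht₀, ht₀G⟩ := exists_CS_between K.isCompact hG hKG
    refine (hρ_le_L _ _ ht₀).trans ?_
    have : L t₀ = atTop.liminf (fun j => μs (φ j) (CS (S := S) t₀)) := ((hL t₀).liminf_eq).symm
    rw [this, hl]
    refine liminf_le_liminf (Eventually.of_forall fun j => (μs (φ j)).apply_mono ht₀G) ?_ ?_
    · exact ⟨0, Eventually.of_forall fun j => zero_le⟩
    · exact Filter.IsBoundedUnder.isCoboundedUnder_ge
        ⟨1, eventually_map.mpr (Eventually.of_forall fun j => (μs (φ j)).apply_le_one _)⟩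
  have step2 : (P G : ℝ≥0∞) ≤ (l : ℝ≥0∞) := by
    rw [ProbabilityMeasure.ennreal_coeFn_eq_coeFn_toMeasure]
    have : P.toMeasure = ρ.measure := rfl
    rw [this, ρ.measure_apply hG.measurableSet, ρ.outerMeasure_of_isOpen G hG]
    refine iSup_le fun K => iSup_le fun hK => ?_
    show ((ρ.toFun K : ℝ≥0) : ℝ≥0∞) ≤ (l : ℝ≥0∞)
    have : ρ.toFun K = ρfun K := rfl
    rw [this]
    exact ENNReal.coe_le_coe.mpr (step1 K hK)
  exact ENNReal.coe_le_coe.mp step2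

lemma compactSpace_probabilityMeasure : CompactSpace (ProbabilityMeasure S) := by
  letI : MetricSpace (ProbabilityMeasure S) := TopologicalSpace.metrizableSpaceMetric _
  rw [← isCompact_univ_iff]
  apply IsSeqCompact.isCompact
  intro x _
  obtain ⟨P, φ, hφ, hT⟩ := exists_subseq_tendsto_probabilityMeasure x
  exact ⟨P, mem_univ _, φ, hφ, hT⟩

end Prokhorov


section aux
-- generic sup-inf comparison
lemma sup_inf_le_sup_inf_add {ια ιβ : Type*} [Nonempty ια] [Nonempty ιβ]
    (f g : ια → ιβ → ℝ) (e C : ℝ)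
    (hbf : ∀ a b, -C ≤ f a b) (hbg : ∀ a b, |g a b| ≤ C)
    (h : ∀ a b, f a b ≤ g a b + e) :
    (⨆ a, ⨅ b, f a b) ≤ (⨆ a, ⨅ b, g a b) + e := by
  have hbbf : ∀ a, BddBelow (Set.range (f a)) := fun a =>
    ⟨-C, by rintro _ ⟨b, rfl⟩; exact hbf a b⟩
  have hbbg : ∀ a, BddBelow (Set.range (g a)) := fun a =>
    ⟨-C, by rintro _ ⟨b, rfl⟩; exact (abs_le.1 (hbg a b)).1⟩
  have hinnerg_le : ∀ a, (⨅ b, g a b) ≤ C := fun a =>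
    (ciInf_le (hbbg a) (Classical.arbitrary ιβ)).trans (abs_le.1 (hbg a _)).2
  have hba : BddAbove (Set.range fun a => ⨅ b, g a b) :=
    ⟨C, by rintro _ ⟨a, rfl⟩; exact hinnerg_le a⟩
  refine ciSup_le fun a => ?_
  have h1 : (⨅ b, f a b) ≤ (⨅ b, g a b) + e := by
    rw [← sub_le_iff_le_add]
    refine le_ciInf fun b => ?_
    have h2 := ciInf_le (hbbf a) b
    linarith [h a b]
  exact h1.trans (add_le_add_left (le_ciSup hba a) e)
end aux


/-- With `F(x) = sup_{μ∈P(A)} inf_{ν∈P(B)} [G(μ,ν) + (q(μ,ν)+c(μ,ν))x]`,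
`A, B` compact metric spaces, `G, q, c` continuous, `q ≤ 0`, `c < -δ < 0`:
`F` is continuous, `F(x) → -∞` as `x → +∞`, `F(x) → +∞` as `x → -∞`, and
for every `y ∈ ℝ` there exists a unique `x` with `F(x) = y`. -/
theorem stmt1
    {A B : Type*} [MetricSpace A] [CompactSpace A] [Nonempty A]
    [MeasurableSpace A] [BorelSpace A]
    [MetricSpace B] [CompactSpace B] [Nonempty B]
    [MeasurableSpace B] [BorelSpace B]
    (G q c : ProbabilityMeasure A × ProbabilityMeasure B → ℝ)
    (hG : Continuous G) (hq : Continuous q) (hc : Continuous c)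
    (hqle : ∀ p, q p ≤ 0)
    (δ : ℝ) (hδ : 0 < δ) (hcδ : ∀ p, c p < -δ)
    (F : ℝ → ℝ)
    (hF : ∀ x, F x = ⨆ μ : ProbabilityMeasure A, ⨅ ν : ProbabilityMeasure B,
      (G (μ, ν) + (q (μ, ν) + c (μ, ν)) * x)) :
    Continuous F ∧ Tendsto F atTop atBot ∧ Tendsto F atBot atTop ∧
      ∀ y : ℝ, ∃! x : ℝ, F x = y := by
  haveI : CompactSpace (ProbabilityMeasure A) := compactSpace_probabilityMeasure
  haveI : CompactSpace (ProbabilityMeasure B) := compactSpace_probabilityMeasure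
  haveI : Nonempty (ProbabilityMeasure A) :=
    ⟨⟨Measure.dirac (Classical.arbitrary A), inferInstance⟩⟩
  haveI : Nonempty (ProbabilityMeasure B) :=
    ⟨⟨Measure.dirac (Classical.arbitrary B), inferInstance⟩⟩
  set σ : ProbabilityMeasure A × ProbabilityMeasure B → ℝ := fun p => q p + c p with hσdef
  have hσcont : Continuous σ := hq.add hc
  -- bounds
  obtain ⟨pG, -, hpG⟩ := IsCompact.exists_isMaxOn isCompact_univ univ_nonempty
    (hG.abs.continuousOn (s := univ))
  obtain ⟨pσ, -, hpσ⟩ := IsCompact.exists_isMaxOn isCompact_univ univ_nonempty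
    (hσcont.abs.continuousOn (s := univ))
  set Cg : ℝ := |G pG| with hCg
  set K : ℝ := |σ pσ| with hK
  have hGbound : ∀ p, |G p| ≤ Cg := fun p => hpG (mem_univ p)
  have hσbound : ∀ p, |σ p| ≤ K := fun p => hpσ (mem_univ p)
  have hKpos : 0 ≤ K := (abs_nonneg _).trans (hσbound (Classical.arbitrary _))
  have hσle : ∀ p, σ p ≤ -δ := fun p => by
    have := hqle p; have := (hcδ p).le; simp only [hσdef]; linarith
  have hδK : δ ≤ K := by
    have h1 := hσle (Classical.arbitrary _)
    have h2 := hσbound (Classical.arbitrary _)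
    have := neg_abs_le (σ (Classical.arbitrary (ProbabilityMeasure A × ProbabilityMeasure B)))
    have := abs_le.1 h2
    linarith [this.1]
  -- the two key inequalities
  have key : ∀ x y : ℝ, y ≤ x → F x ≤ F y - δ * (x - y) ∧ F y - K * (x - y) ≤ F x := by
    intro x y hyx
    set C : ℝ := Cg + K * |x| + K * |y| with hC
    have hbound : ∀ (z : ℝ) p, |G p + σ p * z| ≤ Cg + K * |z| := by
      intro z p
      calc |G p + σ p * z| ≤ |G p| + |σ p * z| := abs_add_le _ _
        _ ≤ Cg + K * |z| := by
            rw [abs_mul]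
            exact add_le_add (hGbound p) (mul_le_mul_of_nonneg_right (hσbound p) (abs_nonneg _))
    have hboundx : ∀ p, |G p + σ p * x| ≤ C := fun p => by
      have := hbound x p
      have h0 : 0 ≤ K * |y| := mul_nonneg hKpos (abs_nonneg _)
      rw [hC]; linarith
    have hboundy : ∀ p, |G p + σ p * y| ≤ C := fun p => by
      have := hbound y p
      have h0 : 0 ≤ K * |x| := mul_nonneg hKpos (abs_nonneg _)
      rw [hC]; linarith
    constructor
    · -- F x ≤ F y - δ (x - y)
      have h := sup_inf_le_sup_inf_add
        (fun μ ν => G (μ, ν) + (q (μ, ν) + c (μ, ν)) * x)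
        (fun μ ν => G (μ, ν) + (q (μ, ν) + c (μ, ν)) * y)
        (-δ * (x - y)) C
        (fun a b => neg_le_of_abs_le (hboundx (a, b)))
        (fun a b => hboundy (a, b))
        (fun a b => by
          have h1 : σ (a, b) * (x - y) ≤ -δ * (x - y) :=
            mul_le_mul_of_nonneg_right (hσle (a, b)) (by linarith)
          have h3 : σ (a, b) * x - σ (a, b) * y = σ (a, b) * (x - y) := by ring
          show G (a, b) + σ (a, b) * x ≤ G (a, b) + σ (a, b) * y + -δ * (x - y)
          linarith)
      rw [hF x, hF y]; linarith [h]
    · -- F y ≤ F x + K (x - y)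
      have h := sup_inf_le_sup_inf_add
        (fun μ ν => G (μ, ν) + (q (μ, ν) + c (μ, ν)) * y)
        (fun μ ν => G (μ, ν) + (q (μ, ν) + c (μ, ν)) * x)
        (K * (x - y)) C
        (fun a b => neg_le_of_abs_le (hboundy (a, b)))
        (fun a b => hboundx (a, b))
        (fun a b => by
          have h2 := abs_le.1 (hσbound (a, b))
          have h1 : -σ (a, b) * (x - y) ≤ K * (x - y) :=
            mul_le_mul_of_nonneg_right (by linarith [h2.1]) (by linarith)
          have h3 : σ (a, b) * y - σ (a, b) * x = -σ (a, b) * (x - y) := by ring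
          show G (a, b) + σ (a, b) * y ≤ G (a, b) + σ (a, b) * x + K * (x - y)
          linarith)
      rw [hF x, hF y]; linarith [h]
  -- Lipschitz continuity
  have hlip : LipschitzWith (Real.toNNReal K) F := by
    apply LipschitzWith.of_dist_le_mul
    intro x y
    rcases le_total y x with h | h
    · obtain ⟨h1, h2⟩ := key x y h
      rw [Real.dist_eq, Real.dist_eq, Real.coe_toNNReal K hKpos,
        abs_of_nonneg (by linarith : (0:ℝ) ≤ x - y)]
      rw [abs_le]
      have hδxy : 0 ≤ δ * (x - y) := mul_nonneg hδ.le (by linarith)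
      constructor <;> linarith
    · obtain ⟨h1, h2⟩ := key y x h
      rw [Real.dist_eq, Real.dist_eq, Real.coe_toNNReal K hKpos,
        abs_sub_comm (F x) (F y), abs_sub_comm x y,
        abs_of_nonneg (by linarith : (0:ℝ) ≤ y - x)]
      rw [abs_le]
      have hδxy : 0 ≤ δ * (y - x) := mul_nonneg hδ.le (by linarith)
      constructor <;> linarith
  have hcont : Continuous F := hlip.continuous
  -- strict antitonicity
  have hanti : StrictAnti F := by
    intro x y hxy
    obtain ⟨h1, -⟩ := key y x hxy.le
    have : 0 < δ * (y - x) := mul_pos hδ (by linarith)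
    linarith
  -- tendsto atTop atBot
  have htop : Tendsto F atTop atBot := by
    have hg : Tendsto (fun x : ℝ => F 0 - δ * x) atTop atBot := by
      have h1 : Tendsto (fun x : ℝ => δ * x) atTop atTop :=
        Tendsto.const_mul_atTop hδ tendsto_id
      have h2 : Tendsto (fun x : ℝ => -(δ * x)) atTop atBot :=
        tendsto_neg_atTop_atBot.comp h1
      simpa [sub_eq_add_neg] using tendsto_atBot_add_const_left atTop (F 0) h2
    refine tendsto_atBot_mono' atTop ?_ hg
    filter_upwards [eventually_ge_atTop (0:ℝ)] with x hx
    have := (key x 0 hx).1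
    simpa using this
  -- tendsto atBot atTop
  have hbot : Tendsto F atBot atTop := by
    have hg : Tendsto (fun x : ℝ => F 0 - δ * x) atBot atTop := by
      have h1 : Tendsto (fun x : ℝ => δ * x) atBot atBot :=
        Tendsto.const_mul_atBot hδ tendsto_id
      have h2 : Tendsto (fun x : ℝ => -(δ * x)) atBot atTop :=
        tendsto_neg_atBot_atTop.comp h1
      simpa [sub_eq_add_neg] using tendsto_atTop_add_const_left atBot (F 0) h2
    refine tendsto_atTop_mono' atBot ?_ hg
    filter_upwards [eventually_le_atBot (0:ℝ)] with x hx
    have := (key 0 x hx).1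
    simpa using this
  refine ⟨hcont, htop, hbot, fun y => ?_⟩
  -- surjectivity via F ∘ neg
  have hsurj : Function.Surjective (fun x : ℝ => F (-x)) := by
    apply Continuous.surjective (hcont.comp continuous_neg)
    · exact hbot.comp tendsto_neg_atTop_atBot
    · exact htop.comp tendsto_neg_atBot_atTop
  obtain ⟨x, hx⟩ := hsurj y
  refine ⟨-x, hx, fun z hz => ?_⟩
  by_contra hne
  rcases lt_or_gt_of_ne hne with h | h
  · exact absurd (hz.trans hx.symm) (hanti h).ne'
  · exact absurd (hx.trans hz.symm) (hanti h).ne'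
end

section
/- Let (X, ⪰) be an ordered Banach space with closed cone C satisfying C − C = X, and let T : X → X be order-preserving, positively 1-homogeneous, and completely continuous. Suppose there exist a nonzero ζ ∈ C and N > 0 with N·T(ζ) ⪰ ζ. Then there exist a nonzero f ∈ C and λ > 0 with T f = λ f. -/
open Bornology

open Filter Topology

noncomputable def krIter {X : Type*} [AddCommGroup X] [Module ℝ X]
    (S : X → X) (g : X) (l : ℝ) : ℕ → X
  | 0 => 0
  | n + 1 => l⁻¹ • (S (krIter S g l n) + g)

lemma kr_conv {X : Type*} [NormedAddCommGroup X] [NormedSpace ℝ X]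
    (C : Set X) (hCclosed : IsClosed C) (hC0 : (0:X) ∈ C)
    (hCadd : ∀ x ∈ C, ∀ y ∈ C, x + y ∈ C)
    (hCpointed : ∀ x, x ∈ C → -x ∈ C → x = 0)
    (x : ℕ → X) (Q : Set X) (hQ : IsCompact Q) (hxQ : ∀ n, x n ∈ Q)
    (hmono : ∀ n, x (n + 1) - x n ∈ C) :
    ∃ v, Tendsto x atTop (𝓝 v) ∧ ∀ n, v - x n ∈ C := by
  have chain : ∀ m n : ℕ, m ≤ n → x n - x m ∈ C := by
    intro m n h
    induction n, h using Nat.le_induction with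
    | base => simpa using hC0
    | succ n hmn ih =>
      have h2 := hCadd _ (hmono n) _ ih
      simpa [sub_add_sub_cancel] using h2
  have sublim : ∀ (w : X) (φ : ℕ → ℕ), Tendsto φ atTop atTop →
      Tendsto (fun k => x (φ k)) atTop (𝓝 w) → ∀ n, w - x n ∈ C := by
    intro w φ hφ hw n
    have h1 : Tendsto (fun k => x (φ k) - x n) atTop (𝓝 (w - x n)) :=
      hw.sub tendsto_const_nhds
    refine hCclosed.mem_of_tendsto h1 ?_
    filter_upwards [hφ.eventually_ge_atTop n] with k hk
    exact chain n (φ k) hk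
  obtain ⟨v, hvQ, φ, hφ, hconv⟩ := hQ.tendsto_subseq hxQ
  have hconv' : Tendsto (fun k => x (φ k)) atTop (𝓝 v) := hconv
  have hvlow : ∀ n, v - x n ∈ C := sublim v φ hφ.tendsto_atTop hconv'
  refine ⟨v, ?_, hvlow⟩
  by_contra hnot
  rw [Metric.tendsto_atTop] at hnot
  push_neg at hnot
  obtain ⟨ε, hε, hfreq⟩ := hnot
  choose ψ hψ₁ hψ₂ using hfreq
  have hψ : Tendsto ψ atTop atTop := tendsto_atTop_mono hψ₁ tendsto_id
  obtain ⟨w, hwQ, φ₂, hφ₂, hconv₂⟩ := hQ.tendsto_subseq (fun k => hxQ (ψ k))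
  have hconv₂' : Tendsto (fun k => x (ψ (φ₂ k))) atTop (𝓝 w) := hconv₂
  have hwlow : ∀ n, w - x n ∈ C :=
    sublim w (fun k => ψ (φ₂ k)) (hψ.comp hφ₂.tendsto_atTop) hconv₂'
  have h1 : w - v ∈ C := by
    have ht : Tendsto (fun k => w - x (φ k)) atTop (𝓝 (w - v)) :=
      tendsto_const_nhds.sub hconv'
    exact hCclosed.mem_of_tendsto ht (Eventually.of_forall fun k => hwlow (φ k))
  have h2 : v - w ∈ C := by
    have ht : Tendsto (fun k => v - x (ψ (φ₂ k))) atTop (𝓝 (v - w)) :=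
      tendsto_const_nhds.sub hconv₂'
    exact hCclosed.mem_of_tendsto ht (Eventually.of_forall fun k => hvlow _)
  have hwv : w = v := by
    have h0 : w - v = 0 := hCpointed _ h1 (by simpa [neg_sub] using h2)
    exact sub_eq_zero.mp h0
  have hd : ∀ k, ε ≤ dist (x (ψ (φ₂ k))) v := fun k => hψ₂ (φ₂ k)
  have hdt : Tendsto (fun k => dist (x (ψ (φ₂ k))) v) atTop (𝓝 (dist w v)) :=
    hconv₂'.dist tendsto_const_nhds
  have hεle : ε ≤ dist w v := ge_of_tendsto hdt (Eventually.of_forall hd)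
  rw [hwv, dist_self] at hεle
  linarith


set_option maxHeartbeats 2000000 in
/-- nonlinear Krein–Rutman theorem: let `X` be an ordered Banach space with a
closed cone `C` satisfying `C − C = X`, and `T : X → X` order-preserving (for the order
`x ⪰ y ↔ x − y ∈ C`), positively 1-homogeneous and completely continuous.  If there are a
nonzero `ζ ∈ C` and `N > 0` with `N·T(ζ) ⪰ ζ`, then there exist a nonzero `f ∈ C` and
`λ > 0` with `Tf = λf`. -/
theorem stmt11
    {X : Type*} [NormedAddCommGroup X] [NormedSpace ℝ X] [CompleteSpace X]
    (C : Set X) (hCne : C.Nonempty) (hCclosed : IsClosed C)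
    (hCadd : ∀ x ∈ C, ∀ y ∈ C, x + y ∈ C)
    (hCsmul : ∀ x ∈ C, ∀ r : ℝ, 0 ≤ r → r • x ∈ C)
    (hCpointed : ∀ x, x ∈ C → -x ∈ C → x = 0)
    (hCgen : ∀ x : X, ∃ a ∈ C, ∃ b ∈ C, x = a - b)
    (T : X → X)
    (hmono : ∀ x y : X, x - y ∈ C → T x - T y ∈ C)
    (hhomog : ∀ (r : ℝ), 0 ≤ r → ∀ x, T (r • x) = r • T x)
    (hcont : Continuous T)
    (hcompact : ∀ s : Set X, IsBounded s → IsCompact (closure (T '' s)))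
    (ζ : X) (hζC : ζ ∈ C) (hζ0 : ζ ≠ 0)
    (N : ℝ) (hN : 0 < N) (hNT : N • T ζ - ζ ∈ C) :
    ∃ f ∈ C, f ≠ 0 ∧ ∃ lam : ℝ, 0 < lam ∧ T f = lam • f := by
  classical
  set S : X → X := fun x => N • T x with hSdef
  have hC0 : (0:X) ∈ C := by
    obtain ⟨c, hc⟩ := hCne
    simpa using hCsmul c hc 0 le_rfl
  have hT0 : T 0 = 0 := by
    have h := hhomog 0 le_rfl 0
    simpa using h
  have hS0 : S 0 = 0 := by
    show N • T 0 = 0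
    rw [hT0, smul_zero]
  have hSmono : ∀ x y, x - y ∈ C → S x - S y ∈ C := by
    intro x y h
    have h2 := hCsmul _ (hmono x y h) N hN.le
    show N • T x - N • T y ∈ C
    rwa [← smul_sub]
  have hShom : ∀ (r : ℝ), 0 ≤ r → ∀ x, S (r • x) = r • S x := by
    intro r hr x
    show N • T (r • x) = r • (N • T x)
    rw [hhomog r hr x, smul_comm]
  have hSC : ∀ x ∈ C, S x ∈ C := by
    intro x hx
    have h2 := hSmono x 0 (by simpa using hx)
    simpa [hS0] using h2
  have hScont : Continuous S := hcont.const_smul N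
  have hSζ : S ζ - ζ ∈ C := hNT
  have hScpt : ∀ s : Set X, IsBounded s → IsCompact (closure (S '' s)) := by
    intro s hs
    have h1 : IsCompact ((fun y : X => N • y) '' closure (T '' s)) :=
      (hcompact s hs).image (continuous_const_smul N)
    refine h1.of_isClosed_subset isClosed_closure ?_
    refine closure_minimal ?_ h1.isClosed
    have : S '' s = (fun y : X => N • y) '' (T '' s) := by
      rw [Set.image_image]
    rw [this]
    exact Set.image_mono subset_closure
  -- K1 and the norm bound M
  set K1 : Set X := closure (S '' Metric.closedBall 0 1) with hK1def
  have hK1cpt : IsCompact K1 := hScpt _ Metric.isBounded_closedBall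
  obtain ⟨M0, hM0⟩ := isBounded_iff_forall_norm_le.mp hK1cpt.isBounded
  set M : ℝ := max M0 0 + 1 with hMdef
  have hM1 : (1:ℝ) ≤ M := by
    have h := le_max_right M0 0
    rw [hMdef]; linarith
  have hMK1 : ∀ y ∈ K1, ‖y‖ ≤ M := by
    intro y hy
    have := hM0 y hy
    have h2 : M0 ≤ M := by rw [hMdef]; have := le_max_left M0 0; linarith
    linarith
  have hMS : ∀ x : X, ‖S x‖ ≤ M * ‖x‖ := by
    intro x
    rcases eq_or_ne x 0 with rfl | hx
    · simp [hS0]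
    · have hxpos : 0 < ‖x‖ := norm_pos_iff.mpr hx
      have hu : (‖x‖⁻¹ • x) ∈ Metric.closedBall (0:X) 1 := by
        simp [norm_smul, abs_of_nonneg (inv_nonneg.mpr hxpos.le),
          inv_mul_cancel₀ hxpos.ne']
      have hSu : S (‖x‖⁻¹ • x) ∈ K1 := subset_closure ⟨_, hu, rfl⟩
      have hb := hMK1 _ hSu
      have hrw : S x = ‖x‖ • S (‖x‖⁻¹ • x) := by
        rw [← hShom _ hxpos.le, smul_inv_smul₀ hxpos.ne']
      calc ‖S x‖ = ‖x‖ * ‖S (‖x‖⁻¹ • x)‖ := by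
            rw [hrw, norm_smul, Real.norm_eq_abs, abs_of_nonneg hxpos.le]
        _ ≤ ‖x‖ * M := by
            exact mul_le_mul_of_nonneg_left hb hxpos.le
        _ = M * ‖x‖ := mul_comm _ _
  -- iteration basics
  have hiterC : ∀ g ∈ C, ∀ l : ℝ, 0 < l → ∀ n, krIter S g l n ∈ C := by
    intro g hg l hl n
    induction n with
    | zero => exact hC0
    | succ n ih =>
      exact hCsmul _ (hCadd _ (hSC _ ih) _ hg) _ (inv_nonneg.mpr hl.le)
  have hiterMono : ∀ g ∈ C, ∀ l : ℝ, 0 < l → ∀ n,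
      krIter S g l (n+1) - krIter S g l n ∈ C := by
    intro g hg l hl n
    induction n with
    | zero =>
      have : krIter S g l 1 - krIter S g l 0 = l⁻¹ • g := by
        simp [krIter, hS0]
      rw [this]
      exact hCsmul _ hg _ (inv_nonneg.mpr hl.le)
    | succ n ih =>
      have hd : krIter S g l (n+2) - krIter S g l (n+1)
          = l⁻¹ • (S (krIter S g l (n+1)) - S (krIter S g l n)) := by
        show l⁻¹ • (S (krIter S g l (n+1)) + g) - l⁻¹ • (S (krIter S g l n) + g) = _
        rw [← smul_sub]
        congr 1
        abel
      rw [hd]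
      exact hCsmul _ (hSmono _ _ ih) _ (inv_nonneg.mpr hl.le)
  have hchain : ∀ g ∈ C, ∀ l : ℝ, 0 < l → ∀ m n : ℕ, m ≤ n →
      krIter S g l n - krIter S g l m ∈ C := by
    intro g hg l hl m n h
    induction n, h using Nat.le_induction with
    | base => simpa using hC0
    | succ n hmn ih =>
      have h2 := hCadd _ (hiterMono g hg l hl n) _ ih
      simpa [sub_add_sub_cancel] using h2
  have hBddTop : ∀ g : X, ∀ n, ‖krIter S g (M+1) n‖ ≤ ‖g‖ := by
    intro g n
    have hlpos : (0:ℝ) < M + 1 := by linarith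
    induction n with
    | zero => simp [krIter]
    | succ n ih =>
      have h1 : ‖krIter S g (M+1) (n+1)‖ = (M+1)⁻¹ * ‖S (krIter S g (M+1) n) + g‖ := by
        show ‖(M+1)⁻¹ • (S (krIter S g (M+1) n) + g)‖ = _
        rw [norm_smul, Real.norm_eq_abs, abs_of_nonneg (inv_nonneg.mpr hlpos.le)]
      have h2 : ‖S (krIter S g (M+1) n) + g‖ ≤ M * ‖g‖ + ‖g‖ := by
        calc ‖S (krIter S g (M+1) n) + g‖ ≤ ‖S (krIter S g (M+1) n)‖ + ‖g‖ := norm_add_le _ _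
          _ ≤ M * ‖krIter S g (M+1) n‖ + ‖g‖ := by have := hMS (krIter S g (M+1) n); linarith
          _ ≤ M * ‖g‖ + ‖g‖ := by
              have hM0' : (0:ℝ) ≤ M := by linarith
              nlinarith
      rw [h1]
      rw [inv_mul_le_iff₀ hlpos]
      calc ‖S (krIter S g (M+1) n) + g‖ ≤ M * ‖g‖ + ‖g‖ := h2
        _ = (M + 1) * ‖g‖ := by ring

  -- solution from bounded iteration
  have hsol : ∀ g ∈ C, ∀ l : ℝ, 0 < l → (∃ R, ∀ n, ‖krIter S g l n‖ ≤ R) →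
      ∃ v ∈ C, l • v = S v + g := by
    intro g hg l hl hB
    obtain ⟨R, hR⟩ := hB
    set F : X → X := fun y => l⁻¹ • (y + g) with hF
    have hFcont : Continuous F := (continuous_id.add continuous_const).const_smul l⁻¹
    set Q : Set X := insert 0 (F '' closure (S '' Metric.closedBall 0 R)) with hQdef
    have hQcpt : IsCompact Q := ((hScpt _ Metric.isBounded_closedBall).image hFcont).insert 0
    have hmem : ∀ n, krIter S g l n ∈ Q := by
      intro n
      cases n with
      | zero => exact Set.mem_insert _ _
      | succ n =>
        refine Set.mem_insert_of_mem _ ⟨S (krIter S g l n), ?_, rfl⟩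
        exact subset_closure ⟨_, by simpa [mem_closedBall_zero_iff] using hR n, rfl⟩
    obtain ⟨v, hvt, -⟩ := kr_conv C hCclosed hC0 hCadd hCpointed _ Q hQcpt hmem
      (hiterMono g hg l hl)
    have hvC : v ∈ C := hCclosed.mem_of_tendsto hvt (Eventually.of_forall (hiterC g hg l hl))
    have h1 : Tendsto (fun n => krIter S g l (n+1)) atTop (𝓝 v) :=
      hvt.comp (tendsto_add_atTop_nat 1)
    have h2 : Tendsto (fun n => l⁻¹ • (S (krIter S g l n) + g)) atTop
        (𝓝 (l⁻¹ • (S v + g))) :=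
      (((hScont.tendsto v).comp hvt).add tendsto_const_nhds).const_smul _
    have h3 : v = l⁻¹ • (S v + g) := tendsto_nhds_unique h1 h2
    refine ⟨v, hvC, ?_⟩
    nth_rewrite 1 [h3]
    rw [smul_inv_smul₀ hl.ne']
  -- no solution when the source is a witness at rate ≥ l
  have hnosol : ∀ w ∈ C, w ≠ 0 → ∀ ν l : ℝ, 0 < l → l ≤ ν → S w - ν • w ∈ C →
      ∀ v ∈ C, l • v = S v + w → False := by
    intro w hw hw0 ν l hl hlν hwt v hv hveq
    set c : ℕ → ℝ := fun n => Nat.rec 0 (fun _ p => (ν * p + 1) / l) n with hc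
    have hc0 : c 0 = 0 := rfl
    have hcs : ∀ n, c (n+1) = (ν * c n + 1) / l := fun n => rfl
    have hνpos : 0 < ν := lt_of_lt_of_le hl hlν
    have hcnn : ∀ n, 0 ≤ c n := by
      intro n; induction n with
      | zero => simp [hc0]
      | succ n ih => rw [hcs]; positivity
    have hcge : ∀ n : ℕ, (n:ℝ) * l⁻¹ ≤ c n := by
      intro n; induction n with
      | zero => simp [hc0]
      | succ n ih =>
        have key : c n + 1/l ≤ c (n+1) := by
          rw [hcs]
          have h1 : c n + 1/l = (l * c n + 1)/l := by field_simp
          rw [h1]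
          apply (div_le_div_iff_of_pos_right hl).mpr
          nlinarith [hcnn n]
        push_cast
        calc ((n:ℝ)+1) * l⁻¹ = (n:ℝ)*l⁻¹ + l⁻¹ := by ring
          _ ≤ c n + 1/l := by rw [one_div]; exact add_le_add ih le_rfl
          _ ≤ c (n+1) := key
    have hvc : ∀ n, v - c n • w ∈ C := by
      intro n; induction n with
      | zero => simpa [hc0] using hv
      | succ n ih =>
        have e1 : S v - S (c n • w) ∈ C := hSmono _ _ ih
        have e2 : S (c n • w) = c n • S w := hShom _ (hcnn n) w
        have e3 : c n • S w - c n • (ν • w) ∈ C := by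
          have h4 := hCsmul _ hwt (c n) (hcnn n)
          rwa [smul_sub] at h4
        have e3b : S (c n • w) - c n • (ν • w) ∈ C := by rw [e2]; exact e3
        have e4 : S v - c n • (ν • w) ∈ C := by
          have h5 := hCadd _ e1 _ e3b
          simpa [sub_add_sub_cancel] using h5
        have key : c n • (ν • w) + w = (ν * c n + 1) • w := by
          rw [smul_smul, mul_comm (c n) ν, add_smul, one_smul]
        have e5 : l • v - (ν * c n + 1) • w ∈ C := by
          have h6 : l • v - (ν * c n + 1) • w = S v - c n • (ν • w) := by
            rw [hveq, ← key]; abel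
          rwa [h6]
        have e6 := hCsmul _ e5 l⁻¹ (inv_nonneg.mpr hl.le)
        have e7 : l⁻¹ • (l • v - (ν * c n + 1) • w) = v - c (n+1) • w := by
          rw [smul_sub, inv_smul_smul₀ hl.ne', smul_smul, hcs, div_eq_inv_mul]
        rwa [e7] at e6
    have hcpos : ∀ n : ℕ, 1 ≤ n → 0 < c n := by
      intro n hn
      have h1 := hcge n
      have h2 : (1:ℝ) * l⁻¹ ≤ (n:ℝ) * l⁻¹ := by
        apply mul_le_mul_of_nonneg_right _ (inv_nonneg.mpr hl.le)
        exact_mod_cast hn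
      have h3 : (0:ℝ) < l⁻¹ := inv_pos.mpr hl
      nlinarith
    have hct : Tendsto c atTop atTop := by
      apply tendsto_atTop_mono hcge
      exact Tendsto.atTop_mul_const (inv_pos.mpr hl) tendsto_natCast_atTop_atTop
    have hcinv : Tendsto (fun n => (c n)⁻¹) atTop (𝓝 0) := hct.inv_tendsto_atTop
    have hlim : Tendsto (fun n => (c n)⁻¹ • v - w) atTop (𝓝 (-w)) := by
      have h1 : Tendsto (fun n => (c n)⁻¹ • v) atTop (𝓝 ((0:ℝ) • v)) :=
        hcinv.smul tendsto_const_nhds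
      rw [zero_smul] at h1
      have h2 := h1.sub (tendsto_const_nhds (x := w))
      simpa using h2
    have hmemC : -w ∈ C := by
      refine hCclosed.mem_of_tendsto hlim ?_
      filter_upwards [eventually_ge_atTop 1] with n hn
      have hpos := hcpos n hn
      have h8 := hCsmul _ (hvc n) (c n)⁻¹ (inv_nonneg.mpr hpos.le)
      rw [smul_sub, smul_smul, inv_mul_cancel₀ hpos.ne', one_smul] at h8
      exact h8
    exact hw0 (hCpointed w hw hmemC)

  -- witness from unbounded iteration
  have hwit : ∀ g ∈ C, ∀ l : ℝ, 0 < l → (∀ R : ℝ, ∃ n, R < ‖krIter S g l n‖) →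
      ∃ z, z ∈ C ∧ ‖z‖ = 1 ∧ S z - l • z ∈ C ∧ l • z ∈ K1 := by
    intro g hg l hl hub
    have hex : ∀ k : ℕ, ∃ n, (k:ℝ) + 1 ≤ ‖krIter S g l n‖ := by
      intro k; obtain ⟨n, hn⟩ := hub ((k:ℝ)+1); exact ⟨n, hn.le⟩
    set m : ℕ → ℕ := fun k => Nat.find (hex k) with hm
    have hm1 : ∀ k : ℕ, (k:ℝ) + 1 ≤ ‖krIter S g l (m k)‖ := fun k => Nat.find_spec (hex k)
    have hmpos : ∀ k, m k ≠ 0 := by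
      intro k hk
      have h1 := hm1 k
      rw [hk] at h1
      have h2 : ((k:ℝ) + 1) ≤ 0 := by simpa [krIter] using h1
      have h3 : (0:ℝ) ≤ (k:ℝ) := Nat.cast_nonneg k
      linarith
    have hmprev : ∀ k, ‖krIter S g l (m k - 1)‖ < (k:ℝ) + 1 := by
      intro k
      have hlt : m k - 1 < m k := Nat.sub_lt (Nat.pos_of_ne_zero (hmpos k)) one_pos
      have h1 := Nat.find_min (hex k) hlt
      exact lt_of_not_ge h1
    set t : ℕ → ℝ := fun k => ‖krIter S g l (m k)‖ with htdef
    have htpos : ∀ k, 0 < t k := by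
      intro k
      have h1 : (0:ℝ) < (k:ℝ) + 1 := by positivity
      exact lt_of_lt_of_le h1 (hm1 k)
    set z : ℕ → X := fun k => (t k)⁻¹ • krIter S g l (m k) with hzdef
    set a : ℕ → X := fun k => S ((t k)⁻¹ • krIter S g l (m k - 1)) with hadef
    have hsucc : ∀ k, krIter S g l (m k) = l⁻¹ • (S (krIter S g l (m k - 1)) + g) := by
      intro k
      have hp : m k = (m k - 1) + 1 := (Nat.succ_pred_eq_of_pos (Nat.pos_of_ne_zero (hmpos k))).symm
      calc krIter S g l (m k) = krIter S g l ((m k - 1) + 1) := by rw [← hp]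
        _ = l⁻¹ • (S (krIter S g l (m k - 1)) + g) := rfl
    have hkey : ∀ k, z k = l⁻¹ • (a k + (t k)⁻¹ • g) := by
      intro k
      show (t k)⁻¹ • krIter S g l (m k) = _
      rw [hsucc k]
      show (t k)⁻¹ • (l⁻¹ • (S (krIter S g l (m k - 1)) + g))
        = l⁻¹ • (S ((t k)⁻¹ • krIter S g l (m k - 1)) + (t k)⁻¹ • g)
      rw [smul_comm, smul_add, hShom _ (inv_nonneg.mpr (htpos k).le)]
    have hanorm : ∀ k, (t k)⁻¹ • krIter S g l (m k - 1) ∈ Metric.closedBall (0:X) 1 := by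
      intro k
      rw [mem_closedBall_zero_iff, norm_smul, Real.norm_eq_abs,
        abs_of_nonneg (inv_nonneg.mpr (htpos k).le)]
      have h1 := hmprev k
      have h2 := hm1 k
      have h3 := htpos k
      calc (t k)⁻¹ * ‖krIter S g l (m k - 1)‖ ≤ (t k)⁻¹ * t k := by
            apply mul_le_mul_of_nonneg_left _ (inv_nonneg.mpr h3.le)
            exact le_trans h1.le h2
        _ = 1 := inv_mul_cancel₀ h3.ne'
    have haK1 : ∀ k, a k ∈ K1 := fun k => subset_closure ⟨_, hanorm k, rfl⟩
    obtain ⟨b, hbK1, φ, hφ, hab⟩ := hK1cpt.tendsto_subseq haK1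
    have habt : Tendsto (fun k => a (φ k)) atTop (𝓝 b) := hab
    have htlow : ∀ k : ℕ, (k:ℝ) + 1 ≤ t (φ k) := by
      intro k
      have h1 : (k:ℝ) ≤ (φ k : ℝ) := by exact_mod_cast hφ.le_apply
      calc ((k:ℝ)+1) ≤ (φ k : ℝ) + 1 := by linarith
        _ ≤ t (φ k) := hm1 (φ k)
    have htφ : Tendsto (fun k => t (φ k)) atTop atTop := by
      apply tendsto_atTop_mono htlow
      exact tendsto_atTop_add_const_right _ 1 tendsto_natCast_atTop_atTop
    have htinv : Tendsto (fun k => (t (φ k))⁻¹) atTop (𝓝 0) := htφ.inv_tendsto_atTop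
    have hzt : Tendsto (fun k => z (φ k)) atTop (𝓝 (l⁻¹ • b)) := by
      have h1 : Tendsto (fun k => l⁻¹ • (a (φ k) + (t (φ k))⁻¹ • g)) atTop
          (𝓝 (l⁻¹ • (b + (0:ℝ) • g))) :=
        ((habt.add (htinv.smul tendsto_const_nhds)).const_smul _)
      rw [zero_smul, add_zero] at h1
      have h2 : (fun k => z (φ k)) = fun k => l⁻¹ • (a (φ k) + (t (φ k))⁻¹ • g) := by
        funext k; exact hkey (φ k)
      rw [h2]; exact h1
    have hznorm : ∀ k, ‖z k‖ = 1 := by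
      intro k
      show ‖(t k)⁻¹ • krIter S g l (m k)‖ = 1
      rw [norm_smul, Real.norm_eq_abs, abs_of_nonneg (inv_nonneg.mpr (htpos k).le)]
      exact inv_mul_cancel₀ (htpos k).ne'
    have hzinf_norm : ‖l⁻¹ • b‖ = 1 := by
      have h1 : Tendsto (fun k => ‖z (φ k)‖) atTop (𝓝 ‖l⁻¹ • b‖) := hzt.norm
      have h2 : (fun k => ‖z (φ k)‖) = fun _ => (1:ℝ) := funext fun k => hznorm (φ k)
      rw [h2] at h1
      exact tendsto_nhds_unique h1 tendsto_const_nhds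
    have hzinfC : l⁻¹ • b ∈ C := by
      refine hCclosed.mem_of_tendsto hzt (Eventually.of_forall fun k => ?_)
      exact hCsmul _ (hiterC g hg l hl (m (φ k))) _ (inv_nonneg.mpr (htpos (φ k)).le)
    have hlz : l • (l⁻¹ • b) = b := smul_inv_smul₀ hl.ne' b
    have hwitmem : ∀ k, S (z k) - l • z k + (t k)⁻¹ • g ∈ C := by
      intro k
      have hdiff : krIter S g l (m k) - krIter S g l (m k - 1) ∈ C := by
        have hp : m k = (m k - 1) + 1 := (Nat.succ_pred_eq_of_pos (Nat.pos_of_ne_zero (hmpos k))).symm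
        have h1 := hiterMono g hg l hl (m k - 1)
        rwa [← hp] at h1
      have hstep : z k - (t k)⁻¹ • krIter S g l (m k - 1) ∈ C := by
        have h2 := hCsmul _ hdiff _ (inv_nonneg.mpr (htpos k).le)
        rwa [smul_sub] at h2
      have hSm : S (z k) - a k ∈ C := hSmono _ _ hstep
      have hak : l • z k = a k + (t k)⁻¹ • g := by
        rw [hkey k, smul_inv_smul₀ hl.ne']
      have h3 : S (z k) - l • z k + (t k)⁻¹ • g = S (z k) - a k := by
        rw [hak]; abel
      rw [h3]; exact hSm
    have hwitinf : S (l⁻¹ • b) - l • (l⁻¹ • b) ∈ C := by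
      have h1 : Tendsto (fun k => S (z (φ k)) - l • z (φ k) + (t (φ k))⁻¹ • g) atTop
          (𝓝 (S (l⁻¹ • b) - l • (l⁻¹ • b) + (0:ℝ) • g)) := by
        refine Tendsto.add ?_ (htinv.smul tendsto_const_nhds)
        exact ((hScont.tendsto _).comp hzt).sub (hzt.const_smul l)
      rw [zero_smul, add_zero] at h1
      exact hCclosed.mem_of_tendsto h1 (Eventually.of_forall fun k => hwitmem (φ k))
    refine ⟨l⁻¹ • b, hzinfC, hzinf_norm, hwitinf, ?_⟩
    rw [hlz]; exact hbK1

  -- boundedness sets and their infima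
  set Bs : X → Set ℝ := fun g => {l : ℝ | 0 < l ∧ ∃ R, ∀ n, ‖krIter S g l n‖ ≤ R} with hBs
  have hBtop : ∀ g : X, (M + 1) ∈ Bs g := fun g => ⟨by linarith, ‖g‖, hBddTop g⟩
  have hBne : ∀ g : X, (Bs g).Nonempty := fun g => ⟨M+1, hBtop g⟩
  have hBbdd : ∀ g : X, BddBelow (Bs g) := fun g => ⟨0, fun l hl => hl.1.le⟩
  set mu : X → ℝ := fun g => sInf (Bs g) with hmu
  have hmu_le : ∀ g, mu g ≤ M + 1 := fun g => csInf_le (hBbdd g) (hBtop g)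
  have hmu_wit : ∀ g ∈ C, g ≠ 0 → ∀ ν : ℝ, 0 < ν → S g - ν • g ∈ C →
      (∀ l ∈ Bs g, ν < l) ∧ ν ≤ mu g := by
    intro g hg hg0 ν hν hwt
    have h1 : ∀ l ∈ Bs g, ν < l := by
      intro l hl
      by_contra hle
      push_neg at hle
      obtain ⟨v, hvC, hveq⟩ := hsol g hg l hl.1 hl.2
      exact hnosol g hg hg0 ν l hl.1 hle hwt v hvC hveq
    exact ⟨h1, le_csInf (hBne g) fun l hl => (h1 l hl).le⟩
  -- the supremum of the infima
  set SV : Set ℝ := {r : ℝ | ∃ g, g ∈ C ∧ g ≠ 0 ∧ mu g = r} with hSVdef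
  have hSVne : SV.Nonempty := ⟨mu ζ, ζ, hζC, hζ0, rfl⟩
  have hSVbdd : BddAbove SV := by
    refine ⟨M + 1, ?_⟩
    rintro r ⟨g, -, -, rfl⟩
    exact hmu_le g
  set lamstar : ℝ := sSup SV with hls
  have hζwit : S ζ - (1:ℝ) • ζ ∈ C := by rw [one_smul]; exact hSζ
  have hζmu : (1:ℝ) ≤ mu ζ := (hmu_wit ζ hζC hζ0 1 one_pos hζwit).2
  have hlam1 : (1:ℝ) ≤ lamstar := le_trans hζmu (le_csSup hSVbdd ⟨ζ, hζC, hζ0, rfl⟩)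
  have hlampos : (0:ℝ) < lamstar := lt_of_lt_of_le one_pos hlam1
  -- sources whose infima approximate lamstar
  have hgj : ∀ j : ℕ, ∃ g, g ∈ C ∧ g ≠ 0 ∧ lamstar - ((j:ℝ)+2)⁻¹ < mu g ∧ mu g ≤ lamstar := by
    intro j
    have h1 : lamstar - ((j:ℝ)+2)⁻¹ < lamstar := by
      have h0 : (0:ℝ) < ((j:ℝ)+2)⁻¹ := by positivity
      linarith
    obtain ⟨r, hrSV, hr⟩ := exists_lt_of_lt_csSup hSVne h1
    obtain ⟨g, hgC, hg0, hgr⟩ := hrSV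
    refine ⟨g, hgC, hg0, ?_, le_csSup hSVbdd ⟨g, hgC, hg0, rfl⟩⟩
    rw [hgr]; exact hr
  choose gj hgjC hgj0 hgjlt hgjle using hgj
  have hrj_pos : ∀ j : ℕ, (0:ℝ) < mu (gj j) := by
    intro j
    have hj0 : (0:ℝ) ≤ (j:ℝ) := Nat.cast_nonneg j
    have h2 : ((j:ℝ)+2)⁻¹ ≤ 2⁻¹ := by
      rw [← one_div, ← one_div]
      exact one_div_le_one_div_of_le (by norm_num) (by linarith)
    have h3 := hgjlt j
    have h4 : (2:ℝ)⁻¹ < 1 := by norm_num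
    linarith
  set ej : ℕ → ℝ := fun j => min (mu (gj j) / 2) ((j:ℝ)+1)⁻¹ with hej
  have hej_pos : ∀ j, 0 < ej j := fun j =>
    lt_min (by have := hrj_pos j; linarith) (by positivity)
  set lj : ℕ → ℝ := fun j => mu (gj j) - ej j with hljdef
  have hlj_pos : ∀ j, 0 < lj j := by
    intro j
    have h1 : ej j ≤ mu (gj j)/2 := min_le_left _ _
    have h2 := hrj_pos j
    show 0 < mu (gj j) - ej j
    linarith
  have hlj_lt : ∀ j, lj j < mu (gj j) := by
    intro j
    have := hej_pos j
    show mu (gj j) - ej j < mu (gj j)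
    linarith
  have hnb : ∀ j : ℕ, ∀ R : ℝ, ∃ n, R < ‖krIter S (gj j) (lj j) n‖ := by
    intro j R
    by_contra hcon
    push_neg at hcon
    have hmem : lj j ∈ Bs (gj j) := ⟨hlj_pos j, R, hcon⟩
    have h2 : mu (gj j) ≤ lj j := csInf_le (hBbdd _) hmem
    have h3 := hlj_lt j
    linarith
  have hzj : ∀ j : ℕ, ∃ z, z ∈ C ∧ ‖z‖ = 1 ∧ S z - lj j • z ∈ C ∧ lj j • z ∈ K1 :=
    fun j => hwit (gj j) (hgjC j) (lj j) (hlj_pos j) (hnb j)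
  choose zj hzjC hzjnorm hzjwit hzjK1 using hzj
  have hlj_tendsto : Tendsto lj atTop (𝓝 lamstar) := by
    have hlow : ∀ j : ℕ, lamstar - ((j:ℝ)+2)⁻¹ - ((j:ℝ)+1)⁻¹ ≤ lj j := by
      intro j
      have h1 := hgjlt j
      have h2 : ej j ≤ ((j:ℝ)+1)⁻¹ := min_le_right _ _
      show lamstar - ((j:ℝ)+2)⁻¹ - ((j:ℝ)+1)⁻¹ ≤ mu (gj j) - ej j
      linarith
    have hhigh : ∀ j : ℕ, lj j ≤ lamstar := by
      intro j
      have h1 := hgjle j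
      have h2 := (hej_pos j).le
      show mu (gj j) - ej j ≤ lamstar
      linarith
    have ht1 : Tendsto (fun j : ℕ => ((j:ℝ)+2)⁻¹) atTop (𝓝 0) :=
      (tendsto_atTop_add_const_right _ 2 tendsto_natCast_atTop_atTop).inv_tendsto_atTop
    have ht2 : Tendsto (fun j : ℕ => ((j:ℝ)+1)⁻¹) atTop (𝓝 0) :=
      (tendsto_atTop_add_const_right _ 1 tendsto_natCast_atTop_atTop).inv_tendsto_atTop
    have htl : Tendsto (fun j : ℕ => lamstar - ((j:ℝ)+2)⁻¹ - ((j:ℝ)+1)⁻¹) atTop (𝓝 lamstar) := by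
      have h5 := ((tendsto_const_nhds (x := lamstar)).sub ht1).sub ht2
      simpa using h5
    exact tendsto_of_tendsto_of_tendsto_of_le_of_le htl tendsto_const_nhds hlow hhigh
  obtain ⟨b, hbK1, φ, hφ, hbt⟩ := hK1cpt.tendsto_subseq hzjK1
  have hbt' : Tendsto (fun j => lj (φ j) • zj (φ j)) atTop (𝓝 b) := hbt
  have hljφ : Tendsto (fun j => lj (φ j)) atTop (𝓝 lamstar) := hlj_tendsto.comp hφ.tendsto_atTop
  have hljφinv : Tendsto (fun j => (lj (φ j))⁻¹) atTop (𝓝 lamstar⁻¹) := hljφ.inv₀ hlampos.ne'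
  have hzφt : Tendsto (fun j => zj (φ j)) atTop (𝓝 (lamstar⁻¹ • b)) := by
    have h1 : (fun j => zj (φ j)) = fun j => (lj (φ j))⁻¹ • (lj (φ j) • zj (φ j)) := by
      funext j; rw [inv_smul_smul₀ (hlj_pos (φ j)).ne']
    rw [h1]
    exact hljφinv.smul hbt'
  set h : X := lamstar⁻¹ • b with hhdef
  have hhC : h ∈ C := hCclosed.mem_of_tendsto hzφt (Eventually.of_forall fun j => hzjC (φ j))
  have hhnorm : ‖h‖ = 1 := by
    have h1 : Tendsto (fun j => ‖zj (φ j)‖) atTop (𝓝 ‖h‖) := hzφt.norm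
    have h2 : (fun j => ‖zj (φ j)‖) = fun _ => (1:ℝ) := funext fun j => hzjnorm (φ j)
    rw [h2] at h1
    exact tendsto_nhds_unique h1 tendsto_const_nhds
  have hh0 : h ≠ 0 := by intro h0; rw [h0] at hhnorm; simp at hhnorm
  have hhwit : S h - lamstar • h ∈ C := by
    have h1 : Tendsto (fun j => S (zj (φ j)) - lj (φ j) • zj (φ j)) atTop
        (𝓝 (S h - lamstar • h)) :=
      (((hScont.tendsto h).comp hzφt)).sub (hljφ.smul hzφt)
    exact hCclosed.mem_of_tendsto h1 (Eventually.of_forall fun j => hzjwit (φ j))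
  obtain ⟨hBh_gt, hmuh_ge⟩ := hmu_wit h hhC hh0 lamstar hlampos hhwit
  have hmuh_le : mu h ≤ lamstar := le_csSup hSVbdd ⟨h, hhC, hh0, rfl⟩
  have hmuh : mu h = lamstar := le_antisymm hmuh_le hmuh_ge
  have hLj : ∀ j : ℕ, ∃ l, l ∈ Bs h ∧ l < lamstar + ((j:ℝ)+1)⁻¹ := by
    intro j
    have h3 : (0:ℝ) < ((j:ℝ)+1)⁻¹ := by positivity
    have h2 : sInf (Bs h) = lamstar := hmuh
    have h1 : sInf (Bs h) < lamstar + ((j:ℝ)+1)⁻¹ := by linarith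
    obtain ⟨l, hl, hl2⟩ := exists_lt_of_csInf_lt (hBne h) h1
    exact ⟨l, hl, hl2⟩
  choose Lj hLjB hLjlt using hLj
  have hLj_gt : ∀ j, lamstar < Lj j := fun j => hBh_gt _ (hLjB j)
  have hLj_pos : ∀ j, 0 < Lj j := fun j => lt_trans hlampos (hLj_gt j)
  have hLj_tendsto : Tendsto Lj atTop (𝓝 lamstar) := by
    have ht2 : Tendsto (fun j : ℕ => lamstar + ((j:ℝ)+1)⁻¹) atTop (𝓝 (lamstar + 0)) :=
      tendsto_const_nhds.add
        ((tendsto_atTop_add_const_right _ 1 tendsto_natCast_atTop_atTop).inv_tendsto_atTop)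
    rw [add_zero] at ht2
    exact tendsto_of_tendsto_of_tendsto_of_le_of_le tendsto_const_nhds ht2
      (fun j => (hLj_gt j).le) (fun j => (hLjlt j).le)
  have hvj : ∀ j : ℕ, ∃ v ∈ C, Lj j • v = S v + h :=
    fun j => hsol h hhC (Lj j) (hLj_pos j) (hLjB j).2
  choose vj hvjC hvjeq using hvj
  by_cases hbdd : ∃ R : ℝ, ∀ j, ‖vj j‖ ≤ R
  · exfalso
    obtain ⟨R, hR⟩ := hbdd
    have hKR : IsCompact (closure (S '' Metric.closedBall 0 R)) :=
      hScpt _ Metric.isBounded_closedBall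
    have hmem : ∀ j, S (vj j) ∈ closure (S '' Metric.closedBall 0 R) :=
      fun j => subset_closure ⟨_, by simpa [mem_closedBall_zero_iff] using hR j, rfl⟩
    obtain ⟨s, hsK, ψ, hψ, hst⟩ := hKR.tendsto_subseq hmem
    have hst' : Tendsto (fun j => S (vj (ψ j))) atTop (𝓝 s) := hst
    have hLψ : Tendsto (fun j => Lj (ψ j)) atTop (𝓝 lamstar) :=
      hLj_tendsto.comp hψ.tendsto_atTop
    have hLψinv : Tendsto (fun j => (Lj (ψ j))⁻¹) atTop (𝓝 lamstar⁻¹) := hLψ.inv₀ hlampos.ne'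
    have hveq' : ∀ j, vj (ψ j) = (Lj (ψ j))⁻¹ • (S (vj (ψ j)) + h) := by
      intro j
      rw [← hvjeq (ψ j), inv_smul_smul₀ (hLj_pos (ψ j)).ne']
    have hvt : Tendsto (fun j => vj (ψ j)) atTop (𝓝 (lamstar⁻¹ • (s + h))) := by
      have h1 : Tendsto (fun j => (Lj (ψ j))⁻¹ • (S (vj (ψ j)) + h)) atTop
          (𝓝 (lamstar⁻¹ • (s + h))) := hLψinv.smul (hst'.add tendsto_const_nhds)
      have h2 : (fun j => vj (ψ j)) = fun j => (Lj (ψ j))⁻¹ • (S (vj (ψ j)) + h) :=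
        funext hveq'
      rw [h2]; exact h1
    have hvbarC : lamstar⁻¹ • (s + h) ∈ C :=
      hCclosed.mem_of_tendsto hvt (Eventually.of_forall fun j => hvjC (ψ j))
    have hsv : S (lamstar⁻¹ • (s + h)) = s := by
      have h1 : Tendsto (fun j => S (vj (ψ j))) atTop (𝓝 (S (lamstar⁻¹ • (s + h)))) :=
        (hScont.tendsto _).comp hvt
      exact tendsto_nhds_unique h1 hst'
    have heq : lamstar • (lamstar⁻¹ • (s + h)) = S (lamstar⁻¹ • (s + h)) + h := by
      rw [smul_inv_smul₀ hlampos.ne', hsv]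
    exact hnosol h hhC hh0 lamstar lamstar hlampos le_rfl hhwit _ hvbarC heq
  · push_neg at hbdd
    have hsel : ∀ k : ℕ, ∃ j, (k:ℝ) < ‖vj j‖ := fun k => hbdd k
    choose jk hjk using hsel
    have htkpos : ∀ k, 0 < ‖vj (jk k)‖ :=
      fun k => lt_of_le_of_lt (Nat.cast_nonneg k) (hjk k)
    set wk : ℕ → X := fun k => ‖vj (jk k)‖⁻¹ • vj (jk k) with hwkdef
    have hwknorm : ∀ k, ‖wk k‖ = 1 := by
      intro k
      show ‖‖vj (jk k)‖⁻¹ • vj (jk k)‖ = 1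
      rw [norm_smul, Real.norm_eq_abs, abs_of_nonneg (inv_nonneg.mpr (htkpos k).le)]
      exact inv_mul_cancel₀ (htkpos k).ne'
    have hwkC : ∀ k, wk k ∈ C :=
      fun k => hCsmul _ (hvjC (jk k)) _ (inv_nonneg.mpr (htkpos k).le)
    have hwkeq : ∀ k, Lj (jk k) • wk k = S (wk k) + ‖vj (jk k)‖⁻¹ • h := by
      intro k
      show Lj (jk k) • (‖vj (jk k)‖⁻¹ • vj (jk k))
        = S (‖vj (jk k)‖⁻¹ • vj (jk k)) + ‖vj (jk k)‖⁻¹ • h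
      rw [hShom _ (inv_nonneg.mpr (htkpos k).le), smul_comm, hvjeq (jk k), smul_add]
    have hLbdd : ∀ k, Lj (jk k) ∈ Set.Icc lamstar (lamstar + 1) := by
      intro k
      refine ⟨(hLj_gt _).le, ?_⟩
      have h1 := hLjlt (jk k)
      have h3 : (1:ℝ) ≤ (jk k:ℝ) + 1 := by
        have := Nat.cast_nonneg (α := ℝ) (jk k)
        linarith
      have h2 : ((jk k:ℝ)+1)⁻¹ ≤ 1 := by
        rw [← one_div]
        exact div_le_one_of_le₀ h3 (by positivity)
      linarith
    obtain ⟨lam', hlam'Icc, φ₁, hφ₁, hL1⟩ := (isCompact_Icc).tendsto_subseq hLbdd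
    have hL1' : Tendsto (fun k => Lj (jk (φ₁ k))) atTop (𝓝 lam') := hL1
    have hlam'pos : 0 < lam' := lt_of_lt_of_le hlampos (hlam'Icc.1)
    have hSmem : ∀ k, S (wk (φ₁ k)) ∈ K1 := by
      intro k
      refine subset_closure ⟨wk (φ₁ k), ?_, rfl⟩
      rw [mem_closedBall_zero_iff, hwknorm]
    obtain ⟨s, hsK1, φ₂, hφ₂, hS2⟩ := hK1cpt.tendsto_subseq hSmem
    have hS2' : Tendsto (fun k => S (wk (φ₁ (φ₂ k)))) atTop (𝓝 s) := hS2
    have hL2 : Tendsto (fun k => Lj (jk (φ₁ (φ₂ k)))) atTop (𝓝 lam') :=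
      hL1'.comp hφ₂.tendsto_atTop
    have hL2inv : Tendsto (fun k => (Lj (jk (φ₁ (φ₂ k))))⁻¹) atTop (𝓝 lam'⁻¹) :=
      hL2.inv₀ hlam'pos.ne'
    have htk : ∀ k : ℕ, (k:ℝ) < ‖vj (jk (φ₁ (φ₂ k)))‖ := by
      intro k
      have h1 : k ≤ φ₁ (φ₂ k) := le_trans hφ₂.le_apply hφ₁.le_apply
      have h2 := hjk (φ₁ (φ₂ k))
      have h3 : (k:ℝ) ≤ (φ₁ (φ₂ k) : ℝ) := by exact_mod_cast h1
      linarith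
    have htinv2 : Tendsto (fun k => ‖vj (jk (φ₁ (φ₂ k)))‖⁻¹) atTop (𝓝 0) := by
      apply Tendsto.inv_tendsto_atTop
      apply tendsto_atTop_mono (fun k => (htk k).le)
      exact tendsto_natCast_atTop_atTop
    have hwt : Tendsto (fun k => wk (φ₁ (φ₂ k))) atTop (𝓝 (lam'⁻¹ • (s + (0:ℝ) • h))) := by
      have h1 : (fun k => wk (φ₁ (φ₂ k)))
          = fun k => (Lj (jk (φ₁ (φ₂ k))))⁻¹ •
              (S (wk (φ₁ (φ₂ k))) + ‖vj (jk (φ₁ (φ₂ k)))‖⁻¹ • h) := by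
        funext k
        rw [← hwkeq (φ₁ (φ₂ k)), inv_smul_smul₀ (hLj_pos _).ne']
      rw [h1]
      exact hL2inv.smul (hS2'.add (htinv2.smul tendsto_const_nhds))
    rw [zero_smul, add_zero] at hwt
    have hfC : lam'⁻¹ • s ∈ C := hCclosed.mem_of_tendsto hwt (Eventually.of_forall fun k => hwkC _)
    have hfnorm : ‖lam'⁻¹ • s‖ = 1 := by
      have h1 : Tendsto (fun k => ‖wk (φ₁ (φ₂ k))‖) atTop (𝓝 ‖lam'⁻¹ • s‖) := hwt.norm
      have h2 : (fun k => ‖wk (φ₁ (φ₂ k))‖) = fun _ => (1:ℝ) := funext fun k => hwknorm _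
      rw [h2] at h1
      exact tendsto_nhds_unique h1 tendsto_const_nhds
    have hf0 : lam'⁻¹ • s ≠ 0 := by
      intro h0; rw [h0] at hfnorm; simp at hfnorm
    have hSf : S (lam'⁻¹ • s) = s := by
      have h1 : Tendsto (fun k => S (wk (φ₁ (φ₂ k)))) atTop (𝓝 (S (lam'⁻¹ • s))) :=
        (hScont.tendsto _).comp hwt
      exact tendsto_nhds_unique h1 hS2'
    have heig : S (lam'⁻¹ • s) = lam' • (lam'⁻¹ • s) := by
      rw [hSf, smul_inv_smul₀ hlam'pos.ne']
    refine ⟨lam'⁻¹ • s, hfC, hf0, N⁻¹ * lam', by positivity, ?_⟩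
    have h1 : N • T (lam'⁻¹ • s) = lam' • (lam'⁻¹ • s) := heig
    have h2 : T (lam'⁻¹ • s) = N⁻¹ • (N • T (lam'⁻¹ • s)) := (inv_smul_smul₀ hN.ne' _).symm
    rw [h2, h1, smul_smul]
end

section
/- Suppose ψ₁, ψ₂ : S → (0,∞) both satisfy the stochastic representation ψ_k(i) = E_i[e^{∫₀^τ (c(ξ_t)−ρ)dt} ψ_k(ξ_τ)] for all i outside a finite set B (where τ is the hitting time of B and the expectations are finite), with one of them satisfying ≤ and the other ≥. Choose κ = min_{i∈B} ψ₁(i)/ψ₂(i), so ψ₁ − κψ₂ ≥ 0 on B and vanishes at some î₀ ∈ B. Then ψ₁ − κψ₂ ≥ 0 on all of S: indeed for i outside B, (ψ₁ − κψ₂)(i) ≥ E_i[e^{∫₀^τ(c−ρ)dt}(ψ₁ − κψ₂)(ξ_τ)] ≥ 0 since ξ_τ ∈ B. -/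
open MeasureTheory

/-- comparison argument of Theorems 3.1–3.3: suppose `ψ₁, ψ₂ > 0` on a
countable set `S` satisfy the super/sub-solution stochastic representations outside a finite
set `B`: for `i ∉ B`, `ψ₁(i) ≥ E_i[W·ψ₁(X)]` and `ψ₂(i) ≤ E_i[W·ψ₂(X)]`, where `W ≥ 0` is
the multiplicative weight `e^{∫₀^τ (c−ρ)dt}` and `X = ξ_τ ∈ B` almost surely (`τ` the hitting
time of `B`).  If `κ` is chosen so that `ψ₁ − κψ₂ ≥ 0` on `B` (e.g. `κ = min_B ψ₁/ψ₂`,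
which vanishes at some `î₀ ∈ B`), then `ψ₁ − κψ₂ ≥ 0` on all of `S`. -/
theorem stmt15
    {S : Type*} [Countable S] {Ω : Type*} [MeasurableSpace Ω]
    (Bf : Finset S) (hBne : Bf.Nonempty)
    (ψ₁ ψ₂ : S → ℝ) (hψ₁ : ∀ i, 0 < ψ₁ i) (hψ₂ : ∀ i, 0 < ψ₂ i)
    (P : S → Measure Ω) (hP : ∀ i, IsProbabilityMeasure (P i))
    (W : S → Ω → ℝ) (X : S → Ω → S)
    (hW0 : ∀ i ω, 0 ≤ W i ω)
    (hXB : ∀ i ∉ Bf, ∀ᵐ ω ∂ P i, X i ω ∈ Bf)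
    (hint₁ : ∀ i ∉ Bf, Integrable (fun ω => W i ω * ψ₁ (X i ω)) (P i))
    (hint₂ : ∀ i ∉ Bf, Integrable (fun ω => W i ω * ψ₂ (X i ω)) (P i))
    (hsuper : ∀ i ∉ Bf, (∫ ω, W i ω * ψ₁ (X i ω) ∂ P i) ≤ ψ₁ i)
    (hsub : ∀ i ∉ Bf, ψ₂ i ≤ ∫ ω, W i ω * ψ₂ (X i ω) ∂ P i)
    (κ : ℝ)
    (hκ : ∀ j ∈ Bf, 0 ≤ ψ₁ j - κ * ψ₂ j)
    (hκ0 : ∃ j ∈ Bf, ψ₁ j - κ * ψ₂ j = 0) :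
    ∀ i : S, 0 ≤ ψ₁ i - κ * ψ₂ i := by
  obtain ⟨j, hj, hj0⟩ := hκ0
  have hκpos : 0 < κ := by
    have : ψ₁ j = κ * ψ₂ j := by linarith
    nlinarith [hψ₁ j, hψ₂ j]
  intro i
  by_cases hi : i ∈ Bf
  · exact hκ i hi
  · have hmono : κ * ∫ ω, W i ω * ψ₂ (X i ω) ∂ P i ≤ ∫ ω, W i ω * ψ₁ (X i ω) ∂ P i := by
      rw [← integral_const_mul]
      refine integral_mono_ae ((hint₂ i hi).const_mul κ) (hint₁ i hi) ?_
      filter_upwards [hXB i hi] with ω hω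
      have h1 := hκ _ hω
      have h2 := hW0 i ω
      nlinarith
    have h3 := hsuper i hi
    have h4 := hsub i hi
    nlinarith
end
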